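/- arXiv:2212.14146 — 6 statements merged into one kernel-verified Lean document; each statement's English description precedes it below -/
import Mathlib

section
/- Let T be a connected, locally finite simple graph with more than one vertex, and let G be a group acting on T by graph automorphisms such that the action on the vertex set is free and transitive. Then there exists a finite subset S of G with 1 ∉ S and S = S⁻¹ (i.e., s ∈ S implies s⁻¹ ∈ S) such that S generates G and T is isomorphic, as a graph, to the Cayley graph Cay(G, S). -/
theorem cayley_graph_recognition {V : Type*} (T : SimpleGraph V)
    (hconn : T.Connected) (hlf : ∀ v : V, (T.neighborSet v).Finite)
    (hnt : Nontrivial V)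
    (G : Type*) [Group G] [MulAction G V]
    (hadj : ∀ (g : G) (u v : V), T.Adj (g • u) (g • v) ↔ T.Adj u v)
    (hfree : ∀ (g : G) (v : V), g • v = v → g = 1)
    (htrans : ∀ u v : V, ∃ g : G, g • u = v) :
    ∃ S : Finset G, (1 : G) ∉ S ∧ (∀ s ∈ S, s⁻¹ ∈ S) ∧
      Subgroup.closure (S : Set G) = ⊤ ∧
      Nonempty (T ≃g SimpleGraph.fromRel (fun g h : G => g⁻¹ * h ∈ S)) := by
  obtain ⟨v₀⟩ := hconn.nonempty
  -- the orbit map is injective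
  have hinj : Function.Injective (fun g : G => g • v₀) := by
    intro g h hgh
    simp only at hgh
    have : (h⁻¹ * g) • v₀ = v₀ := by rw [mul_smul, hgh, inv_smul_smul]
    have := hfree _ _ this
    exact (mul_eq_one_iff_inv_eq.mp this ▸ inv_inv h) ▸ rfl
  have hsurj : Function.Surjective (fun g : G => g • v₀) := fun v => htrans v₀ v
  -- S
  have hSfin : {g : G | T.Adj v₀ (g • v₀)}.Finite := by
    have : {g : G | T.Adj v₀ (g • v₀)} = (fun g : G => g • v₀) ⁻¹' (T.neighborSet v₀) := rfl
    rw [this]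
    exact (hlf v₀).preimage (hinj.injOn)
  refine ⟨hSfin.toFinset, ?_, ?_, ?_, ?_⟩
  · simp [T.irrefl]
  · intro s hs
    simp only [Set.Finite.mem_toFinset, Set.mem_setOf_eq] at hs ⊢
    have := (hadj s⁻¹ v₀ (s • v₀)).mpr hs
    rw [inv_smul_smul] at this
    exact this.symm
  · -- closure = ⊤
    rw [eq_top_iff]
    intro g _
    have key : ∀ (v w : V) (p : T.Walk v w) (g k : G), g • v₀ = v → k • v₀ = w →
        k⁻¹ * g ∈ Subgroup.closure (hSfin.toFinset : Set G) := by
      intro v w p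
      induction p with
      | nil =>
        intro g k hg hk
        have : g = k := hinj (by simp only [hg, hk])
        rw [this, inv_mul_cancel]
        exact Subgroup.one_mem _
      | @cons v u w ha _ ih =>
        intro g k hg hk
        obtain ⟨h, hh⟩ := htrans v₀ u
        have hhc := ih h k hh hk
        have hmem : g⁻¹ * h ∈ hSfin.toFinset := by
          simp only [Set.Finite.mem_toFinset, Set.mem_setOf_eq]
          have := (hadj g⁻¹ v u).mpr ha
          rw [← hg, inv_smul_smul, ← hh, ← mul_smul] at this
          exact this
        have hSc : g⁻¹ * h ∈ Subgroup.closure (hSfin.toFinset : Set G) :=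
          Subgroup.subset_closure (by exact_mod_cast hmem)
        have : k⁻¹ * g = (k⁻¹ * h) * (g⁻¹ * h)⁻¹ := by group
        rw [this]
        exact Subgroup.mul_mem _ hhc (Subgroup.inv_mem _ hSc)
    have := key (g • v₀) v₀ (hconn (g • v₀) v₀).some g 1 rfl (one_smul _ _)
    simpa using this
  · -- iso
    let φ : G ≃ V := Equiv.ofBijective _ ⟨hinj, hsurj⟩
    refine ⟨⟨φ.symm, ?_⟩⟩
    intro u v
    have hu : φ.symm u • v₀ = u := φ.apply_symm_apply u
    have hv : φ.symm v • v₀ = v := φ.apply_symm_apply v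
    set g := φ.symm u
    set h := φ.symm v
    simp only [SimpleGraph.fromRel_adj, Set.Finite.mem_toFinset, Set.mem_setOf_eq]
    constructor
    · rintro ⟨hne, hc | hc⟩
      · have := (hadj g v₀ ((g⁻¹ * h) • v₀)).mpr hc
        rw [hu, ← mul_smul, mul_inv_cancel_left, hv] at this
        exact this
      · have := (hadj h v₀ ((h⁻¹ * g) • v₀)).mpr hc
        rw [hv, ← mul_smul, mul_inv_cancel_left, hu] at this
        exact this.symm
    · intro hT
      refine ⟨fun hgh => ?_, Or.inl ?_⟩
      · have huv : u = v := by rw [← hu, ← hv, hgh]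
        exact T.irrefl (huv ▸ hT)
      · have := (hadj g⁻¹ u v).mpr hT
        rw [← hu, ← hv, inv_smul_smul, ← mul_smul] at this
        exact this
end

section
/- Let T be an infinite, locally finite, connected, vertex-transitive simple graph with isoperimetric profile F. Then F(m+n) ≤ F(m) + F(n) for all positive integers m, n; consequently F(kn) ≤ k·F(n) for all positive integers k and n. -/
/-- `T` is vertex-transitive: any vertex can be mapped to any other by a graph
automorphism. -/
def VertexTransitive {V : Type*} (T : SimpleGraph V) : Prop :=
  ∀ u v : V, ∃ φ : T ≃g T, φ u = v

/-- The (vertex) boundary of a set of vertices: vertices outside `A` adjacent to `A`. -/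
def vertexBoundary {V : Type*} (T : SimpleGraph V) (A : Set V) : Set V :=
  {v | v ∉ A ∧ ∃ a ∈ A, T.Adj a v}

/-- The isoperimetric profile: the least size of the boundary of a finite vertex
set of size at least `n`. -/
noncomputable def isoProfile {V : Type*} (T : SimpleGraph V) (n : ℕ) : ℕ :=
  sInf {k | ∃ A : Set V, A.Finite ∧ n ≤ A.ncard ∧ (vertexBoundary T A).ncard = k}

namespace IsoAux

open SimpleGraph Set

variable {V : Type*} (T : SimpleGraph V)

lemma bdry_finite (hlf : ∀ v : V, (T.neighborSet v).Finite) {A : Set V} (hA : A.Finite) :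
    (vertexBoundary T A).Finite := by
  apply Set.Finite.subset (Set.Finite.biUnion hA (fun a _ => hlf a))
  rintro v ⟨hv, a, ha, hadj⟩
  exact Set.mem_biUnion ha hadj

lemma bdry_union_subset (A B : Set V) :
    vertexBoundary T (A ∪ B) ⊆ vertexBoundary T A ∪ vertexBoundary T B := by
  rintro v ⟨hv, a, ha, hadj⟩
  rcases ha with ha | ha
  · exact Or.inl ⟨fun h => hv (Or.inl h), a, ha, hadj⟩
  · exact Or.inr ⟨fun h => hv (Or.inr h), a, ha, hadj⟩

lemma bdry_image (φ : T ≃g T) (A : Set V) :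
    vertexBoundary T (φ '' A) = φ '' vertexBoundary T A := by
  ext v
  constructor
  · rintro ⟨hv, a, ⟨b, hb, rfl⟩, hadj⟩
    refine ⟨φ.symm v, ⟨?_, b, hb, ?_⟩, by simp⟩
    · intro h
      exact hv ⟨φ.symm v, h, by simp⟩
    · have h1 : T.Adj (φ b) (φ (φ.symm v)) := by simpa using hadj
      exact φ.map_adj_iff.mp h1
  · rintro ⟨w, ⟨hw, a, ha, hadj⟩, rfl⟩
    refine ⟨?_, φ a, ⟨a, ha, rfl⟩, φ.map_adj_iff.mpr hadj⟩
    rintro ⟨b, hb, hbe⟩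
    exact hw (φ.injective hbe ▸ hb)

/-- The ball of radius `r` around `v` (as endpoints of short walks into `v`). -/
def ball (v : V) (r : ℕ) : Set V := {u | ∃ p : T.Walk u v, p.length ≤ r}

lemma ball_finite (hlf : ∀ v : V, (T.neighborSet v).Finite) (v : V) (r : ℕ) :
    (ball T v r).Finite := by
  induction r with
  | zero =>
    apply Set.Finite.subset (Set.finite_singleton v)
    rintro u ⟨p, hp⟩
    have := p.eq_of_length_eq_zero (Nat.le_zero.mp hp)
    simp [this]
  | succ r ih =>
    apply Set.Finite.subset (ih.union (Set.Finite.biUnion ih fun w _ => hlf w))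
    rintro u ⟨p, hp⟩
    cases p with
    | nil => exact Or.inl ⟨SimpleGraph.Walk.nil, Nat.zero_le _⟩
    | @cons _ w _ h q =>
      refine Or.inr (Set.mem_biUnion (⟨q, ?_⟩ : w ∈ ball T v r) h.symm)
      simpa [SimpleGraph.Walk.length_cons] using hp

lemma exists_disjoint_translate (hinf : Infinite V)
    (hlf : ∀ v : V, (T.neighborSet v).Finite) (hconn : T.Connected)
    (htrans : VertexTransitive T) {A B : Set V} (hA : A.Finite) (hB : B.Finite)
    (hBne : B.Nonempty) : ∃ φ : T ≃g T, Disjoint (φ '' B) A := by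
  haveI := hinf
  obtain ⟨b0, hb0⟩ := hBne
  have p : ∀ b : V, T.Walk b b0 := fun b => (hconn.preconnected b b0).some
  obtain ⟨D, hD⟩ := (hB.image fun b => (p b).length).bddAbove
  have hDle : ∀ b ∈ B, (p b).length ≤ D := fun b hb => hD (Set.mem_image_of_mem _ hb)
  have hS : (⋃ a ∈ A, ball T a D).Finite :=
    Set.Finite.biUnion hA fun a _ => ball_finite T hlf a D
  obtain ⟨v, hv⟩ := hS.infinite_compl.nonempty
  obtain ⟨φ, hφ⟩ := htrans b0 v
  refine ⟨φ, Set.disjoint_left.mpr ?_⟩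
  rintro x ⟨b, hb, rfl⟩ hxA
  apply hv
  refine Set.mem_biUnion hxA ?_
  refine ⟨(((p b).map φ.toHom).reverse).copy hφ rfl, ?_⟩
  simpa [SimpleGraph.Walk.length_reverse, SimpleGraph.Walk.length_map] using hDle b hb

lemma iso_spec (hinf : Infinite V) (n : ℕ) :
    ∃ A : Set V, A.Finite ∧ n ≤ A.ncard ∧ (vertexBoundary T A).ncard = isoProfile T n := by
  haveI := hinf
  obtain ⟨s, -, hfin, hcard⟩ := (Set.infinite_univ (α := V)).exists_subset_ncard_eq n
  have hne : {k | ∃ A : Set V, A.Finite ∧ n ≤ A.ncard ∧ (vertexBoundary T A).ncard = k}.Nonempty :=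
    ⟨_, s, hfin, hcard.ge, rfl⟩
  exact Nat.sInf_mem hne

lemma step (hinf : Infinite V) (hlf : ∀ v : V, (T.neighborSet v).Finite)
    (hconn : T.Connected) (htrans : VertexTransitive T) (m n : ℕ) (hn : 0 < n) :
    isoProfile T (m + n) ≤ isoProfile T m + isoProfile T n := by
  obtain ⟨A, hAfin, hAm, hAb⟩ := iso_spec T hinf m
  obtain ⟨B, hBfin, hBn, hBb⟩ := iso_spec T hinf n
  have hBne : B.Nonempty := Set.nonempty_of_ncard_ne_zero (by omega)
  obtain ⟨φ, hdis⟩ := exists_disjoint_translate T hinf hlf hconn htrans hAfin hBfin hBne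
  set B' := φ '' B with hB'
  have hB'fin : B'.Finite := hBfin.image _
  have hB'card : B'.ncard = B.ncard := Set.ncard_image_of_injective _ φ.injective
  have hcard : m + n ≤ (A ∪ B').ncard := by
    rw [Set.ncard_union_eq hdis.symm hAfin hB'fin, hB'card]
    omega
  have hb1 : (vertexBoundary T (A ∪ B')).ncard
      ≤ (vertexBoundary T A).ncard + (vertexBoundary T B').ncard :=
    le_trans (Set.ncard_le_ncard (bdry_union_subset T A B')
      ((bdry_finite T hlf hAfin).union (bdry_finite T hlf hB'fin)))
      (Set.ncard_union_le _ _)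
  have hB'b : (vertexBoundary T B').ncard = isoProfile T n := by
    rw [hB', bdry_image, Set.ncard_image_of_injective _ φ.injective, hBb]
  have h0 : isoProfile T (m + n) ≤ (vertexBoundary T (A ∪ B')).ncard :=
    Nat.sInf_le ⟨A ∪ B', hAfin.union hB'fin, hcard, rfl⟩
  omega

end IsoAux

theorem isoProfile_subadditive {V : Type*} (T : SimpleGraph V)
    (hinf : Infinite V) (hlf : ∀ v : V, (T.neighborSet v).Finite)
    (hconn : T.Connected) (htrans : VertexTransitive T) :
    (∀ m n : ℕ, 0 < m → 0 < n →
      isoProfile T (m + n) ≤ isoProfile T m + isoProfile T n) ∧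
    (∀ k n : ℕ, 0 < k → 0 < n →
      isoProfile T (k * n) ≤ k * isoProfile T n) := by
  have hstep := IsoAux.step T hinf hlf hconn htrans
  refine ⟨fun m n _ hn => hstep m n hn, fun k n hk hn => ?_⟩
  induction k with
  | zero => omega
  | succ k ih =>
    rcases Nat.eq_zero_or_pos k with rfl | hkpos
    · simp
    · have h1 := ih hkpos
      have h2 := hstep (k * n) n hn
      have : (k + 1) * n = k * n + n := by ring
      rw [this, Nat.succ_mul]
      omega
end

section
/- Let T be an infinite, locally finite, connected, vertex-transitive simple graph in which every vertex has degree d ≥ 2, with isoperimetric profile F. Let A be a nonempty finite set of vertices and R ∈ ℕ. Then there exists a set P of vertices, each at distance exactly R+1 from A in the graph metric, such that |P| ≥ d^{-(2R+1)}·F(|A|) and the balls B_R(p) for p ∈ P are pairwise disjoint; in particular each such ball B_R(p) is disjoint from A but contains a vertex adjacent to A. -/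
/-- The distance from a vertex `v` to a set `A` of vertices (graph metric). -/
noncomputable def distToSet {V : Type*} (T : SimpleGraph V) (v : V) (A : Set V) : ℕ :=
  sInf {k | ∃ a ∈ A, T.dist v a = k}

/-- The closed ball of radius `R` around `x` in the graph metric. -/
def graphBall {V : Type*} (T : SimpleGraph V) (x : V) (R : ℕ) : Set V :=
  {v | T.dist x v ≤ R}

section Aux
variable {V : Type*} {T : SimpleGraph V}

lemma step_toward (hconn : T.Connected) {u v : V} {n : ℕ} (h : T.dist u v = n + 1) :
    ∃ w : V, T.Adj u w ∧ T.dist w v = n := by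
  obtain ⟨p, hp⟩ := hconn.exists_walk_length_eq_dist u v
  rw [h] at hp
  cases p with
  | nil => simp at hp
  | @cons _ w _ hadj q =>
    refine ⟨w, hadj, le_antisymm ?_ ?_⟩
    · have := SimpleGraph.dist_le q
      simp [SimpleGraph.Walk.length_cons] at hp
      omega
    · have h1 : T.dist u w ≤ 1 :=
        SimpleGraph.dist_le (SimpleGraph.Walk.cons hadj SimpleGraph.Walk.nil)
      have := hconn.dist_triangle (u := u) (v := w) (w := v)
      omega

lemma ball_finite (hconn : T.Connected) (hdeg : ∀ v : V, (T.neighborSet v).Finite)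
    (x : V) (R : ℕ) : (graphBall T x R).Finite := by
  induction R generalizing x with
  | zero =>
    apply Set.Finite.subset (Set.finite_singleton x)
    intro v hv
    have h0 : T.dist x v = 0 := Nat.le_zero.mp hv
    simp [(hconn.dist_eq_zero_iff).mp h0]
  | succ n ih =>
    apply Set.Finite.subset (((hdeg x).biUnion (fun w _ => ih w)).union (ih x))
    intro v hv
    rcases Nat.lt_or_ge (T.dist x v) (n + 1) with h | h
    · right; exact Nat.lt_succ_iff.mp h
    · have h' : T.dist x v = n + 1 := le_antisymm hv h
      obtain ⟨w, hadj, hw⟩ := step_toward hconn h'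
      exact Or.inl (Set.mem_biUnion hadj (le_of_eq hw))

end Aux

section Card
variable {V : Type*} {T : SimpleGraph V} {d : ℕ}

def graphSphere (T : SimpleGraph V) (x : V) (i : ℕ) : Set V := {v | T.dist x v = i}

lemma sphere_subset_ball (x : V) (i : ℕ) : graphSphere T x i ⊆ graphBall T x i :=
  fun _ h => le_of_eq h

lemma sphere_finite (hconn : T.Connected) (hdeg : ∀ v : V, (T.neighborSet v).Finite)
    (x : V) (i : ℕ) : (graphSphere T x i).Finite :=
  (ball_finite hconn hdeg x i).subset (sphere_subset_ball x i)

lemma sphere_card (hconn : T.Connected)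
    (hdeg : ∀ v : V, (T.neighborSet v).Finite ∧ (T.neighborSet v).ncard = d)
    (x : V) (i : ℕ) : (graphSphere T x i).ncard ≤ d ^ i := by
  induction i with
  | zero =>
    have : graphSphere T x 0 ⊆ {x} := by
      intro v hv
      simp [(hconn.dist_eq_zero_iff).mp hv]
    simpa using Set.ncard_le_ncard this (Set.finite_singleton x)
  | succ n ih =>
    classical
    have hsf := sphere_finite hconn (fun v => (hdeg v).1) x n
    set s : Finset V := hsf.toFinset with hs
    set U : Finset V := s.biUnion (fun u => (hdeg u).1.toFinset) with hU
    have hsub : graphSphere T x (n + 1) ⊆ ↑U := by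
      intro v hv
      have hv' : T.dist v x = n + 1 := by rw [SimpleGraph.dist_comm]; exact hv
      obtain ⟨w, hadj, hw⟩ := step_toward hconn hv'
      have hws : w ∈ s := by
        rw [hs, Set.Finite.mem_toFinset]
        show T.dist x w = n
        rw [SimpleGraph.dist_comm]; exact hw
      have : v ∈ (hdeg w).1.toFinset := by
        simp [Set.Finite.mem_toFinset, SimpleGraph.mem_neighborSet]
        exact hadj.symm
      exact Finset.mem_coe.mpr (Finset.mem_biUnion.mpr ⟨w, hws, this⟩)
    calc (graphSphere T x (n + 1)).ncard ≤ (↑U : Set V).ncard :=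
          Set.ncard_le_ncard hsub U.finite_toSet
      _ = U.card := Set.ncard_coe_finset U
      _ ≤ ∑ u ∈ s, (hdeg u).1.toFinset.card := Finset.card_biUnion_le
      _ = ∑ u ∈ s, d := by
          apply Finset.sum_congr rfl
          intro u _
          rw [← Set.ncard_eq_toFinset_card _ (hdeg u).1]
          exact (hdeg u).2
      _ = s.card * d := by simp [Finset.sum_const, Nat.smul_one_eq_cast]
      _ ≤ d ^ n * d := by
          have : s.card = (graphSphere T x n).ncard :=
            (Set.ncard_eq_toFinset_card _ hsf).symm
          exact Nat.mul_le_mul_right d (by rw [this]; exact ih)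
      _ = d ^ (n + 1) := by ring

end Card

section Card2
variable {V : Type*} {T : SimpleGraph V} {d : ℕ}

lemma geom_sum_le (hd : 2 ≤ d) (n : ℕ) : ∑ i ∈ Finset.range (n + 1), d ^ i ≤ d ^ (n + 1) := by
  induction n with
  | zero => simpa using le_trans (by norm_num) hd
  | succ n ih =>
    rw [Finset.sum_range_succ]
    have h2 : d ^ (n + 1) + d ^ (n + 1) ≤ d ^ (n + 1 + 1) := by
      calc d ^ (n+1) + d ^ (n+1) = 2 * d ^ (n+1) := by ring
        _ ≤ d * d ^ (n+1) := Nat.mul_le_mul_right _ hd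
        _ = d ^ (n+1+1) := by ring
    omega

lemma ball_card (hconn : T.Connected)
    (hdeg : ∀ v : V, (T.neighborSet v).Finite ∧ (T.neighborSet v).ncard = d)
    (hd : 2 ≤ d) (x : V) (R : ℕ) : (graphBall T x R).ncard ≤ d ^ (R + 1) := by
  have key : (graphBall T x R).ncard ≤ ∑ i ∈ Finset.range (R + 1), d ^ i := by
    induction R with
    | zero =>
      have hsub : graphBall T x 0 ⊆ {x} := by
        intro v hv
        simp [(hconn.dist_eq_zero_iff).mp (Nat.le_zero.mp hv)]
      simpa using Set.ncard_le_ncard hsub (Set.finite_singleton x)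
    | succ n ih =>
      have hsub : graphBall T x (n + 1) ⊆ graphBall T x n ∪ graphSphere T x (n + 1) := by
        intro v hv
        rcases Nat.lt_or_ge (T.dist x v) (n + 1) with h | h
        · exact Or.inl (Nat.lt_succ_iff.mp h)
        · exact Or.inr (le_antisymm hv h)
      calc (graphBall T x (n + 1)).ncard
          ≤ (graphBall T x n ∪ graphSphere T x (n + 1)).ncard :=
            Set.ncard_le_ncard hsub
              ((ball_finite hconn (fun v => (hdeg v).1) x n).union
                (sphere_finite hconn (fun v => (hdeg v).1) x (n + 1)))
        _ ≤ (graphBall T x n).ncard + (graphSphere T x (n + 1)).ncard := Set.ncard_union_le _ _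
        _ ≤ (∑ i ∈ Finset.range (n + 1), d ^ i) + d ^ (n + 1) :=
            Nat.add_le_add ih (sphere_card hconn hdeg x (n + 1))
        _ = ∑ i ∈ Finset.range (n + 2), d ^ i := (Finset.sum_range_succ _ _).symm
  exact le_trans key (geom_sum_le hd R)

end Card2

section DistSet
variable {V : Type*} {T : SimpleGraph V} {A : Set V}

lemma distToSet_exists (hAne : A.Nonempty) (v : V) :
    ∃ a ∈ A, T.dist v a = distToSet T v A := by
  obtain ⟨a₀, ha₀⟩ := hAne
  have : distToSet T v A ∈ {k | ∃ a ∈ A, T.dist v a = k} :=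
    Nat.sInf_mem ⟨T.dist v a₀, a₀, ha₀, rfl⟩
  exact this

lemma distToSet_le {a : V} (ha : a ∈ A) (v : V) : distToSet T v A ≤ T.dist v a :=
  Nat.sInf_le ⟨a, ha, rfl⟩

lemma distToSet_zero_of_mem (hconn : T.Connected) {a : V} (ha : a ∈ A) :
    distToSet T a A = 0 := by
  have h := distToSet_le (T := T) ha a
  have h0 : T.dist a a = 0 := hconn.dist_eq_zero_iff.mpr rfl
  omega

end DistSet

section Nbhd
variable {V : Type*} {T : SimpleGraph V} {A : Set V}

/-- The `k`-neighborhood of `A`. -/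
def nbhdSet (T : SimpleGraph V) (A : Set V) (k : ℕ) : Set V := {v | distToSet T v A ≤ k}

lemma nbhd_finite (hconn : T.Connected) (hdeg : ∀ v : V, (T.neighborSet v).Finite)
    (hA : A.Finite) (hAne : A.Nonempty) (k : ℕ) : (nbhdSet T A k).Finite := by
  apply Set.Finite.subset (hA.biUnion (fun a _ => ball_finite hconn hdeg a k))
  intro v hv
  have hv' : distToSet T v A ≤ k := hv
  obtain ⟨a, ha, hda⟩ := distToSet_exists (T := T) hAne v
  refine Set.mem_biUnion ha ?_
  show T.dist a v ≤ k
  rw [SimpleGraph.dist_comm]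
  omega

lemma subset_nbhd (hconn : T.Connected) (k : ℕ) : A ⊆ nbhdSet T A k := fun a ha => by
  show distToSet T a A ≤ k
  rw [distToSet_zero_of_mem hconn ha]
  exact Nat.zero_le _

lemma boundary_nbhd (hconn : T.Connected) (hAne : A.Nonempty) (R : ℕ) :
    vertexBoundary T (nbhdSet T A R) = {v | distToSet T v A = R + 1} := by
  ext v
  constructor
  · rintro ⟨hout, u, hu, hadj⟩
    have hgt : R < distToSet T v A := Nat.lt_of_not_le hout
    obtain ⟨a, ha, hda⟩ := distToSet_exists (T := T) hAne u
    have hu' : distToSet T u A ≤ R := hu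
    have h1 : T.dist v u ≤ 1 :=
      SimpleGraph.dist_le (SimpleGraph.Walk.cons hadj.symm SimpleGraph.Walk.nil)
    have htri : T.dist v a ≤ T.dist v u + T.dist u a := hconn.dist_triangle
    have hle : distToSet T v A ≤ T.dist v a := distToSet_le ha v
    show distToSet T v A = R + 1
    omega
  · intro hv
    have hv' : distToSet T v A = R + 1 := hv
    refine ⟨by simp [nbhdSet, hv'], ?_⟩
    obtain ⟨a, ha, hda⟩ := distToSet_exists (T := T) hAne v
    rw [hv'] at hda
    obtain ⟨w, hadj, hw⟩ := step_toward hconn hda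
    refine ⟨w, ?_, hadj.symm⟩
    show distToSet T w A ≤ R
    calc distToSet T w A ≤ T.dist w a := distToSet_le ha w
      _ = R := hw

lemma iso_le_boundary (hconn : T.Connected) (hdeg : ∀ v : V, (T.neighborSet v).Finite)
    (hA : A.Finite) (hAne : A.Nonempty) (R : ℕ) :
    isoProfile T A.ncard ≤ (vertexBoundary T (nbhdSet T A R)).ncard :=
  Nat.sInf_le ⟨nbhdSet T A R, nbhd_finite hconn hdeg hA hAne R,
    Set.ncard_le_ncard (subset_nbhd hconn R) (nbhd_finite hconn hdeg hA hAne R), rfl⟩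

end Nbhd

theorem many_disjoint_balls_adjacent {V : Type*} (T : SimpleGraph V) (d : ℕ) (hd : 2 ≤ d)
    (hinf : Infinite V) (hconn : T.Connected) (htrans : VertexTransitive T)
    (hdeg : ∀ v : V, (T.neighborSet v).Finite ∧ (T.neighborSet v).ncard = d)
    (A : Set V) (hA : A.Finite) (hAne : A.Nonempty) (R : ℕ) :
    ∃ P : Finset V,
      (∀ p ∈ P, distToSet T p A = R + 1) ∧
      (isoProfile T A.ncard : ℝ) / (d : ℝ) ^ (2 * R + 1) ≤ (P.card : ℝ) ∧
      ((P : Set V).Pairwise fun p q => Disjoint (graphBall T p R) (graphBall T q R)) ∧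
      (∀ p ∈ P, Disjoint (graphBall T p R) A ∧
        ∃ v ∈ graphBall T p R, ∃ a ∈ A, T.Adj a v) := by
  classical
  set S : Set V := {v | distToSet T v A = R + 1} with hS
  have hdegf : ∀ v : V, (T.neighborSet v).Finite := fun v => (hdeg v).1
  have hSfin : S.Finite := by
    apply (nbhd_finite hconn hdegf hA hAne (R + 1)).subset
    intro v hv
    exact le_of_eq hv
  have hF : isoProfile T A.ncard ≤ S.ncard := by
    have h := iso_le_boundary hconn hdegf hA hAne R
    rwa [boundary_nbhd hconn hAne R] at h
  set Sf := hSfin.toFinset with hSf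
  have hSmem : ∀ v, v ∈ Sf ↔ distToSet T v A = R + 1 := fun v => Set.Finite.mem_toFinset _
  set good : Finset V → Prop := fun P => ∀ p ∈ P, ∀ q ∈ P, p ≠ q → 2 * R < T.dist p q
    with hgood
  set C := Sf.powerset.filter good with hC
  have hCne : C.Nonempty := ⟨∅, by simp [hC, hgood]⟩
  obtain ⟨P, hPC, hPmax⟩ := Finset.exists_max_image C Finset.card hCne
  have hPsub : P ⊆ Sf := Finset.mem_powerset.mp (Finset.mem_filter.mp hPC).1
  have hPgood : good P := (Finset.mem_filter.mp hPC).2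
  have hcover : ∀ v ∈ Sf, ∃ p ∈ P, T.dist p v ≤ 2 * R := by
    intro v hv
    by_contra hcon
    push_neg at hcon
    have hvP : v ∉ P := by
      intro hvP
      have h1 := hcon v hvP
      have h2 : T.dist v v = 0 := hconn.dist_eq_zero_iff.mpr rfl
      omega
    have hins : insert v P ∈ C := by
      rw [hC, Finset.mem_filter, Finset.mem_powerset]
      refine ⟨Finset.insert_subset hv hPsub, ?_⟩
      intro p hp q hq hpq
      rcases Finset.mem_insert.mp hp with rfl | hp'
      · rcases Finset.mem_insert.mp hq with rfl | hq'
        · exact absurd rfl hpq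
        · have := hcon q hq'
          rwa [SimpleGraph.dist_comm] at this
      · rcases Finset.mem_insert.mp hq with rfl | hq'
        · exact hcon p hp'
        · exact hPgood p hp' q hq' hpq
    have hle := hPmax _ hins
    have hcard : (insert v P).card = P.card + 1 := Finset.card_insert_of_notMem hvP
    omega
  have hcount : Sf.card ≤ P.card * d ^ (2 * R + 1) := by
    have hsub : Sf ⊆ P.biUnion (fun p => (ball_finite hconn hdegf p (2 * R)).toFinset) := by
      intro v hv
      obtain ⟨p, hp, hd2⟩ := hcover v hv
      exact Finset.mem_biUnion.mpr ⟨p, hp, (Set.Finite.mem_toFinset _).mpr hd2⟩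
    calc Sf.card ≤ (P.biUnion (fun p => (ball_finite hconn hdegf p (2 * R)).toFinset)).card :=
          Finset.card_le_card hsub
      _ ≤ ∑ p ∈ P, ((ball_finite hconn hdegf p (2 * R)).toFinset).card :=
          Finset.card_biUnion_le
      _ ≤ ∑ p ∈ P, d ^ (2 * R + 1) := Finset.sum_le_sum (fun p _ => by
          rw [← Set.ncard_eq_toFinset_card _ (ball_finite hconn hdegf p (2 * R))]
          exact ball_card hconn hdeg hd p (2 * R))
      _ = P.card * d ^ (2 * R + 1) := by
          rw [Finset.sum_const, smul_eq_mul]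
  refine ⟨P, ?_, ?_, ?_, ?_⟩
  · intro p hp
    exact (hSmem p).mp (hPsub hp)
  · have hSc : S.ncard = Sf.card := Set.ncard_eq_toFinset_card _ hSfin
    have hnat : isoProfile T A.ncard ≤ P.card * d ^ (2 * R + 1) := by omega
    rw [div_le_iff₀ (by positivity)]
    exact_mod_cast hnat
  · intro p hp q hq hpq
    have hgt := hPgood p (Finset.mem_coe.mp hp) q (Finset.mem_coe.mp hq) hpq
    rw [Set.disjoint_left]
    intro v hvp hvq
    have h1 : T.dist p v ≤ R := hvp
    have h2 : T.dist q v ≤ R := hvq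
    have htri : T.dist p q ≤ T.dist p v + T.dist v q := hconn.dist_triangle
    have hcomm : T.dist v q = T.dist q v := SimpleGraph.dist_comm
    omega
  · intro p hp
    have hpd : distToSet T p A = R + 1 := (hSmem p).mp (hPsub hp)
    constructor
    · rw [Set.disjoint_left]
      intro v hvp hvA
      have h1 : T.dist p v ≤ R := hvp
      have h2 : distToSet T p A ≤ T.dist p v := distToSet_le hvA p
      omega
    · obtain ⟨a, ha, hda⟩ := distToSet_exists (T := T) hAne p
      rw [hpd] at hda
      have hda' : T.dist a p = R + 1 := by rw [SimpleGraph.dist_comm]; exact hda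
      obtain ⟨w, hadj, hw⟩ := step_toward hconn hda'
      refine ⟨w, ?_, a, ha, hadj⟩
      show T.dist p w ≤ R
      rw [SimpleGraph.dist_comm]
      omega
end

section
/- Let n ∈ ℕ and let Γ be a countable subgroup of the group of isometries (surjective self-isometries) of the Euclidean space ℝⁿ. Then there exists a point x ∈ ℝⁿ such that g(x) ≠ x for every g ∈ Γ with g not equal to the identity; that is, x has trivial stabilizer under the action of Γ. -/
/-!
By Mazur–Ulam every isometry of a real normed space is affine, and an affine map that fixes
a nonempty open set fixes its affine span, which is the whole space. Hence the fixed-point set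
of a nontrivial isometry is a closed set with empty interior, i.e. nowhere dense, and by Baire's
theorem countably many such sets cannot cover the complete space.
-/

open Function Set

namespace IsometryEquiv

theorem eq_one_of_eqOn_id_of_isOpen {V P : Type*} [NormedAddCommGroup V] [NormedSpace ℝ V]
    [MetricSpace P] [NormedAddTorsor V P] {g : P ≃ᵢ P} {U : Set P} (hU : IsOpen U)
    (hne : U.Nonempty) (hg : EqOn g id U) : g = 1 := by
  have h : g.toRealAffineIsometryEquiv.toAffineMap = AffineMap.id ℝ P :=
    AffineMap.ext_on (hU.affineSpan_eq_top hne) hg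
  ext x
  exact congrArg (· x) h

theorem isNowhereDense_fixedPoints {V P : Type*} [NormedAddCommGroup V] [NormedSpace ℝ V]
    [MetricSpace P] [NormedAddTorsor V P] {g : P ≃ᵢ P} (hg : g ≠ 1) :
    IsNowhereDense (fixedPoints g) := by
  rw [(isClosed_fixedPoints g.continuous).isNowhereDense_iff, ← not_nonempty_iff_eq_empty]
  exact fun hne ↦ hg <| eq_one_of_eqOn_id_of_isOpen isOpen_interior hne
    fun _ hx ↦ interior_subset (s := fixedPoints g) hx

theorem exists_forall_apply_ne_of_countable {V P : Type*} [NormedAddCommGroup V]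
    [NormedSpace ℝ V] [MetricSpace P] [NormedAddTorsor V P] [CompleteSpace P]
    {S : Set (P ≃ᵢ P)} (hS : S.Countable) : ∃ x : P, ∀ g ∈ S, g ≠ 1 → g x ≠ x := by
  have hmeagre : IsMeagre (⋃ g ∈ {g ∈ S | g ≠ 1}, fixedPoints g) :=
    isMeagre_biUnion (hS.mono (sep_subset S _)) fun _ hg ↦
      (isNowhereDense_fixedPoints hg.2).isMeagre
  obtain ⟨x, hx⟩ : (⋃ g ∈ {g ∈ S | g ≠ 1}, fixedPoints g)ᶜ.Nonempty := by
    rw [nonempty_compl]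
    intro huniv
    exact not_isMeagre_of_isOpen isOpen_univ univ_nonempty (huniv ▸ hmeagre)
  simp only [mem_compl_iff, mem_iUnion, not_exists] at hx
  exact ⟨x, fun g hgS hg1 ↦ hx g ⟨hgS, hg1⟩⟩

end IsometryEquiv

theorem exists_point_trivial_stabilizer (n : ℕ)
    (Γ : Subgroup (EuclideanSpace ℝ (Fin n) ≃ᵢ EuclideanSpace ℝ (Fin n)))
    (hΓ : Countable Γ) :
    ∃ x : EuclideanSpace ℝ (Fin n),
      ∀ g ∈ Γ, g ≠ 1 → g x ≠ x :=
  IsometryEquiv.exists_forall_apply_ne_of_countable hΓ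
end

section
/- Let n ≥ 2 be an integer and let f : ℝ → ℝ be continuous on [0,∞) and satisfy, for every t ≥ 0, the integral equation f(t) = 2 − e^{−t} + (n−1)·∫₀ᵗ e^{−s}·f(t−s) ds. Then there exists a constant C > 0 such that f(t) < C·e^{(n−1)t} for all t ≥ 0. -/
/-!
Substituting `u = t - s` turns the equation into `f t = 2 - e^{-t} + (n-1) e^{-t} F t` with
`F t = ∫₀ᵗ eᵘ f u du`, so `F' = 2eᵗ - 1 + (n-1) F ≤ (n-1) F + 2 e^{(n-1)t}`. The integrating
factor `e^{-(n-1)t}` gives `F t ≤ 2t e^{(n-1)t}`, and since `t e^{-t} ≤ 1` the equation yields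
`f t < 2n e^{(n-1)t}`.
-/

open Real Set intervalIntegral

theorem integral_exp_neg_mul_comp_sub (f : ℝ → ℝ) (t : ℝ) :
    ∫ s in (0 : ℝ)..t, exp (-s) * f (t - s) = exp (-t) * ∫ u in (0 : ℝ)..t, exp u * f u := by
  have hsub := integral_comp_sub_left (fun u => exp (u - t) * f u) (a := 0) (b := t) t
  simp only [sub_self, sub_zero, sub_sub_cancel_left] at hsub
  rw [hsub, ← integral_const_mul]
  refine integral_congr fun u _ => ?_
  rw [sub_eq_add_neg, exp_add]
  ring

theorem hasDerivAt_integral_of_continuousOn_Ici {g : ℝ → ℝ} {a t : ℝ}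
    (hg : ContinuousOn g (Ici a)) (ht : a < t) :
    HasDerivAt (fun u => ∫ x in a..u, g x) (g t) t :=
  integral_hasDerivAt_right
    (hg.mono (uIcc_of_le ht.le ▸ Icc_subset_Ici_self)).intervalIntegrable
    (hg.stronglyMeasurableAtFilter_nhdsWithin measurableSet_Ici t |>.filter_mono
      (by rw [nhdsWithin_eq_nhds.mpr (Ici_mem_nhds ht)]))
    (hg.continuousAt (Ici_mem_nhds ht))

theorem continuousOn_integral_of_continuousOn_Ici {g : ℝ → ℝ} {a t : ℝ}
    (hg : ContinuousOn g (Ici a)) (ht : a ≤ t) :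
    ContinuousOn (fun u => ∫ x in a..u, g x) (Icc a t) := by
  rw [← uIcc_of_le ht]
  exact continuousOn_primitive_interval'
    (hg.mono (uIcc_of_le ht ▸ Icc_subset_Ici_self)).intervalIntegrable left_mem_uIcc

theorem exp_neg_mul_mul_le_of_hasDerivAt_le {F F' : ℝ → ℝ} {a b c B : ℝ} (hab : a ≤ b)
    (hF : ContinuousOn F (Icc a b)) (hF' : ∀ t ∈ Ioo a b, HasDerivAt F (F' t) t)
    (hle : ∀ t ∈ Ioo a b, F' t ≤ c * F t + B * exp (c * t)) :
    exp (-(c * b)) * F b ≤ exp (-(c * a)) * F a + B * (b - a) := by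
  set G : ℝ → ℝ := fun t => exp (-(c * t)) * F t
  have hG' : ∀ t ∈ Ioo a b, HasDerivAt G (exp (-(c * t)) * (F' t - c * F t)) t := fun t ht =>
    ((((hasDerivAt_id t).const_mul c).neg.exp).mul (hF' t ht)).congr_deriv
      (by simp only [Pi.neg_apply, id]; ring)
  have hG'_le : ∀ t ∈ Ioo a b, exp (-(c * t)) * (F' t - c * F t) ≤ B := fun t ht => by
    have hcancel : exp (-(c * t)) * exp (c * t) = 1 := by rw [← exp_add, neg_add_cancel, exp_zero]
    calc exp (-(c * t)) * (F' t - c * F t) ≤ exp (-(c * t)) * (B * exp (c * t)) :=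
          mul_le_mul_of_nonneg_left (by linarith [hle t ht]) (exp_pos _).le
      _ = B := by rw [mul_left_comm, hcancel, mul_one]
  have hGcont : ContinuousOn G (Icc a b) :=
    (by fun_prop : Continuous fun t => exp (-(c * t))).continuousOn.mul hF
  have hGdiff : DifferentiableOn ℝ G (interior (Icc a b)) := by
    rw [interior_Icc]
    exact fun t ht => (hG' t ht).differentiableAt.differentiableWithinAt
  have hGderiv_le : ∀ t ∈ interior (Icc a b), deriv G t ≤ B := by
    rw [interior_Icc]
    exact fun t ht => (hG' t ht).deriv ▸ hG'_le t ht
  have hGab := (convex_Icc a b).image_sub_le_mul_sub_of_deriv_le hGcont hGdiff hGderiv_le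
    a (left_mem_Icc.mpr hab) b (right_mem_Icc.mpr hab) hab
  simp only [G] at hGab
  linarith

theorem two_sub_exp_neg_add_mul_lt_of_exp_neg_mul_le {c t F : ℝ} (hc : 0 ≤ c) (ht : 0 ≤ t)
    (hF : exp (-(c * t)) * F ≤ 2 * t) :
    2 - exp (-t) + c * (exp (-t) * F) < (2 + 2 * c) * exp (c * t) := by
  have hF_le : F ≤ 2 * t * exp (c * t) := by
    have := mul_le_mul_of_nonneg_right hF (exp_pos (c * t)).le
    rwa [mul_right_comm, ← exp_add, neg_add_cancel, exp_zero, one_mul] at this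
  have ht_exp : t * exp (-t) ≤ 1 := by
    rw [exp_neg, ← div_eq_mul_inv, div_le_one (exp_pos t)]
    linarith [add_one_le_exp t]
  have h1 : 1 ≤ exp (c * t) := one_le_exp (by positivity)
  calc 2 - exp (-t) + c * (exp (-t) * F)
      ≤ 2 - exp (-t) + c * (exp (-t) * (2 * t * exp (c * t))) := by gcongr
    _ = 2 - exp (-t) + 2 * c * exp (c * t) * (t * exp (-t)) := by ring
    _ ≤ 2 - exp (-t) + 2 * c * exp (c * t) * 1 := by gcongr
    _ < (2 + 2 * c) * exp (c * t) := by linarith [exp_pos (-t)]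

theorem bound_of_integral_equation (n : ℕ) (hn : 2 ≤ n) (f : ℝ → ℝ)
    (hf : ContinuousOn f (Set.Ici 0))
    (heq : ∀ t : ℝ, 0 ≤ t →
      f t = 2 - Real.exp (-t) +
        ((n : ℝ) - 1) * ∫ s in (0 : ℝ)..t, Real.exp (-s) * f (t - s)) :
    ∃ C : ℝ, 0 < C ∧ ∀ t : ℝ, 0 ≤ t → f t < C * Real.exp (((n : ℝ) - 1) * t) := by
  set c : ℝ := (n : ℝ) - 1 with hc_def
  have hc : 1 ≤ c := by rw [hc_def, le_sub_iff_add_le]; exact_mod_cast hn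
  set F : ℝ → ℝ := fun t => ∫ u in (0 : ℝ)..t, exp u * f u
  have hfF : ∀ t, 0 ≤ t → f t = 2 - exp (-t) + c * (exp (-t) * F t) := fun t ht => by
    rw [heq t ht, integral_exp_neg_mul_comp_sub]
  have hcont : ContinuousOn (fun u => exp u * f u) (Ici 0) :=
    continuous_exp.continuousOn.mul hf
  have hF'_le : ∀ t, 0 ≤ t → exp t * f t ≤ c * F t + 2 * exp (c * t) := fun t ht => by
    have hexp : exp t * exp (-t) = 1 := by rw [← exp_add, add_neg_cancel, exp_zero]
    have hexp_le : exp t ≤ exp (c * t) := exp_le_exp.mpr (by nlinarith)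
    rw [hfF t ht]
    linear_combination (c * F t - 1) * hexp + 2 * hexp_le
  have hF_le : ∀ t, 0 ≤ t → exp (-(c * t)) * F t ≤ 2 * t := fun t ht => by
    simpa [F] using exp_neg_mul_mul_le_of_hasDerivAt_le ht
      (continuousOn_integral_of_continuousOn_Ici hcont ht)
      (fun u hu => hasDerivAt_integral_of_continuousOn_Ici hcont hu.1)
      (fun u hu => hF'_le u hu.1.le)
  refine ⟨2 * n, by positivity, fun t ht => ?_⟩
  have hC : (2 : ℝ) * n = 2 + 2 * c := by rw [hc_def]; ring
  rw [hfF t ht, hC]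
  exact two_sub_exp_neg_add_mul_lt_of_exp_neg_mul_le (by linarith) ht (hF_le t ht)
end

section
/- Let T and W be infinite, locally finite, connected, vertex-transitive simple graphs equipped with their graph metrics, with isoperimetric profiles F_T and F_W respectively. If there exists a quasi-isometry f : V(T) → V(W), then there exists a constant a > 0 such that F_W(n) ≤ a·F_T(n) for all n ≥ 1. Consequently, if T and W are quasi-isometric, then there exist constants a, b > 0 with F_W(n) ≤ a·F_T(n) and F_T(n) ≤ b·F_W(n) for all n ≥ 1 (that is, F_T ∼ F_W). -/
/-- `f` is a `(C, K)`-quasi-isometry between the graph metrics of `T` and `W`. -/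
def IsQuasiIsometry {VT VW : Type*} (T : SimpleGraph VT) (W : SimpleGraph VW)
    (f : VT → VW) (C K : ℝ) : Prop :=
  1 ≤ C ∧ 0 ≤ K ∧
  (∀ x x' : VT,
    (1 / C) * (T.dist x x' : ℝ) - K ≤ (W.dist (f x) (f x') : ℝ) ∧
    (W.dist (f x) (f x') : ℝ) ≤ C * (T.dist x x' : ℝ) + K) ∧
  (∀ y : VW, ∃ x : VT, (W.dist (f x) y : ℝ) ≤ K)

/-!
A quasi-isometry `f : T → W` has fibres of uniformly bounded size `M`, and a connected,
locally finite, vertex-transitive graph has balls of uniformly bounded size. If `A ⊆ T` realises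
`F_T(M n)`, the `k`-neighbourhood `B` of `f '' A` has at least `|A| / M ≥ n` vertices. A boundary
vertex `w` of `B` is close to `f x` for some `x ∉ A` close to `A`, and a geodesic from `A` to `x`
crosses `∂A`; so `∂B` lies in a bounded neighbourhood of `f '' ∂A` and `|∂B| ≤ N |∂A|`. Hence
`F_W(n) ≤ N F_T(M n)`. Finally, vertex-transitivity lets one place `M` translates of a set
realising `F_T(n)` pairwise disjointly, so `F_T(M n) ≤ M F_T(n)`.
-/
open SimpleGraph

namespace SimpleGraph

variable {V V' : Type*} {G : SimpleGraph V} {G' : SimpleGraph V'}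

theorem Hom.dist_map_le (f : G →g G') {u v : V} (h : G.Reachable u v) :
    G'.dist (f u) (f v) ≤ G.dist u v := by
  obtain ⟨p, hp⟩ := h.exists_walk_length_eq_dist
  exact (dist_le (p.map f)).trans_eq (by rw [Walk.length_map, hp])

theorem Iso.dist_map (φ : G ≃g G') (u v : V) : G'.dist (φ u) (φ v) = G.dist u v := by
  by_cases h : G.Reachable u v
  · refine le_antisymm (φ.toHom.dist_map_le h) ?_
    simpa using φ.symm.toHom.dist_map_le (u := φ u) (v := φ v) (Iso.reachable_iff.mpr h)
  · rw [dist_eq_zero_of_not_reachable h, dist_eq_zero_of_not_reachable (mt Iso.reachable_iff.mp h)]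

def closedBall (G : SimpleGraph V) (c : V) (r : ℕ) : Set V := {v | G.dist c v ≤ r}

@[simp]
theorem mem_closedBall {c v : V} {r : ℕ} : v ∈ G.closedBall c r ↔ G.dist c v ≤ r := Iff.rfl

theorem mem_closedBall_self (c : V) (r : ℕ) : c ∈ G.closedBall c r := by simp

theorem Iso.image_closedBall (φ : G ≃g G') (c : V) (r : ℕ) :
    φ '' G.closedBall c r = G'.closedBall (φ c) r := by
  ext w
  obtain ⟨u, rfl⟩ := φ.surjective w
  simp [φ.injective.mem_set_image, Iso.dist_map]

theorem Connected.finite_closedBall (hc : G.Connected) (hlf : ∀ v, (G.neighborSet v).Finite)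
    (c : V) (r : ℕ) : (G.closedBall c r).Finite := by
  induction r with
  | zero =>
    convert Set.finite_singleton c
    ext
    simp [hc.dist_eq_zero_iff, eq_comm]
  | succ r ih =>
    refine ((Set.finite_singleton c).union (ih.biUnion fun u _ => hlf u)).subset ?_
    intro w hw
    obtain ⟨p, hp⟩ := hc.exists_walk_length_eq_dist w c
    cases p with
    | nil => exact Or.inl rfl
    | cons hadj q =>
      refine Or.inr (Set.mem_biUnion (?_ : _ ∈ G.closedBall c r) hadj.symm)
      have := dist_le q
      rw [mem_closedBall, dist_comm] at hw ⊢
      simp only [Walk.length_cons] at hp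
      omega

def HasBoundedGeometry (G : SimpleGraph V) : Prop :=
  ∀ r : ℕ, ∃ N : ℕ, ∀ v, (G.closedBall v r).Finite ∧ (G.closedBall v r).ncard ≤ N

theorem HasBoundedGeometry.finite_neighborSet (hG : G.HasBoundedGeometry) (v : V) :
    (G.neighborSet v).Finite := by
  obtain ⟨N, hN⟩ := hG 1
  exact (hN v).1.subset fun w hw => (dist_eq_one_iff_adj.mpr hw).le

end SimpleGraph

theorem Set.Finite.ncard_biUnion_le_ncard_mul {ι α : Type*} {t : Set ι} (ht : t.Finite)
    {s : ι → Set α} {N : ℕ} (hs : ∀ i ∈ t, (s i).ncard ≤ N) :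
    (⋃ i ∈ t, s i).ncard ≤ t.ncard * N := by
  classical
  have := ht.toFinset.set_ncard_biUnion_le s
  simp only [Set.Finite.mem_toFinset] at this
  refine this.trans ((Finset.sum_le_card_nsmul _ _ N (by simpa using hs)).trans_eq ?_)
  rw [smul_eq_mul, Set.ncard_eq_toFinset_card t ht]

section vertexBoundary

variable {V V' : Type*} {G : SimpleGraph V} {G' : SimpleGraph V'}

theorem vertexBoundary_finite (hlf : ∀ v, (G.neighborSet v).Finite) {A : Set V}
    (hA : A.Finite) : (vertexBoundary G A).Finite :=
  (hA.biUnion fun a _ => hlf a).subset fun _ ⟨_, _, ha, hadj⟩ => Set.mem_biUnion ha hadj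

theorem vertexBoundary_union_subset (A B : Set V) :
    vertexBoundary G (A ∪ B) ⊆ vertexBoundary G A ∪ vertexBoundary G B := by
  rintro v ⟨hv, a, ha | ha, hadj⟩
  · exact Or.inl ⟨fun h => hv (Or.inl h), a, ha, hadj⟩
  · exact Or.inr ⟨fun h => hv (Or.inr h), a, ha, hadj⟩

theorem SimpleGraph.Iso.vertexBoundary_image (φ : G ≃g G') (A : Set V) :
    vertexBoundary G' (φ '' A) = φ '' vertexBoundary G A := by
  ext w
  obtain ⟨v, rfl⟩ := φ.surjective w
  simp only [vertexBoundary, Set.mem_ofPred_eq, φ.injective.mem_set_image, Set.exists_mem_image,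
    Iso.map_adj_iff]

theorem SimpleGraph.Walk.exists_mem_vertexBoundary_dist_le {A : Set V} {a x : V} (p : G.Walk a x)
    (ha : a ∈ A) (hx : x ∉ A) : ∃ b ∈ vertexBoundary G A, G.dist b x ≤ p.length := by
  classical
  obtain ⟨d, hd, hfst, hsnd⟩ := p.exists_boundary_dart A ha hx
  have hsupp := p.dart_snd_mem_support_of_mem_darts hd
  exact ⟨d.snd, ⟨hsnd, d.fst, hfst, d.adj⟩,
    (dist_le _).trans (p.length_dropUntil_le_length hsupp)⟩

end vertexBoundary

section isoProfile

variable {V : Type*} {G : SimpleGraph V}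

theorem isoProfile_le {A : Set V} (hA : A.Finite) {n : ℕ} (hn : n ≤ A.ncard) :
    isoProfile G n ≤ (vertexBoundary G A).ncard :=
  Nat.sInf_le ⟨A, hA, hn, rfl⟩

theorem exists_isoProfile_eq [Infinite V] (n : ℕ) :
    ∃ A : Set V, A.Finite ∧ n ≤ A.ncard ∧ (vertexBoundary G A).ncard = isoProfile G n := by
  obtain ⟨A, -, hA, hcard⟩ := (Set.infinite_univ (α := V)).exists_subset_ncard_eq n
  exact Nat.sInf_mem (s := {k | ∃ A : Set V, A.Finite ∧ n ≤ A.ncard ∧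
    (vertexBoundary G A).ncard = k}) ⟨_, A, hA, hcard.ge, rfl⟩

end isoProfile

namespace VertexTransitive

variable {V : Type*} {G : SimpleGraph V}

theorem ncard_closedBall_eq (htrans : VertexTransitive G) (u v : V) (r : ℕ) :
    (G.closedBall u r).ncard = (G.closedBall v r).ncard := by
  obtain ⟨φ, rfl⟩ := htrans u v
  rw [← φ.image_closedBall, Set.ncard_image_of_injective _ φ.injective]

theorem hasBoundedGeometry (hc : G.Connected) (hlf : ∀ v, (G.neighborSet v).Finite)
    (htrans : VertexTransitive G) : G.HasBoundedGeometry := by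
  intro r
  obtain ⟨v₀⟩ := hc.nonempty
  exact ⟨(G.closedBall v₀ r).ncard, fun v =>
    ⟨hc.finite_closedBall hlf v r, (htrans.ncard_closedBall_eq v v₀ r).le⟩⟩

theorem exists_disjoint_image [Infinite V] (hc : G.Connected)
    (hlf : ∀ v, (G.neighborSet v).Finite) (htrans : VertexTransitive G) {A S : Set V}
    (hA : A.Finite) (hS : S.Finite) : ∃ φ : G ≃g G, Disjoint (φ '' A) S := by
  obtain ⟨v₀⟩ := hc.nonempty
  obtain ⟨D, hD⟩ := ((hA.union hS).image (G.dist v₀)).bddAbove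
  have hD' : ∀ s ∈ A ∪ S, G.dist v₀ s ≤ D := fun s hs => hD ⟨s, hs, rfl⟩
  obtain ⟨v, hv⟩ := (hc.finite_closedBall hlf v₀ (2 * D)).infinite_compl.nonempty
  obtain ⟨φ, rfl⟩ := htrans v₀ v
  refine ⟨φ, Set.disjoint_left.mpr ?_⟩
  rintro _ ⟨a, ha, rfl⟩ haS
  have h₁ : G.dist (φ v₀) (φ a) ≤ D := (φ.dist_map v₀ a).trans_le (hD' a (Or.inl ha))
  have h₂ := hD' _ (Or.inr haS)
  have h₃ : G.dist v₀ (φ v₀) ≤ G.dist v₀ (φ a) + G.dist (φ a) (φ v₀) := hc.dist_triangle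
  rw [dist_comm (u := φ a)] at h₃
  exact hv (show G.dist v₀ (φ v₀) ≤ 2 * D by omega)

theorem exists_ncard_ge_mul_vertexBoundary_le [Infinite V] (hc : G.Connected)
    (hlf : ∀ v, (G.neighborSet v).Finite) (htrans : VertexTransitive G) {A : Set V}
    (hA : A.Finite) (M : ℕ) :
    ∃ B : Set V, B.Finite ∧ M * A.ncard ≤ B.ncard ∧
      (vertexBoundary G B).ncard ≤ M * (vertexBoundary G A).ncard := by
  induction M with
  | zero => exact ⟨∅, Set.finite_empty, by simp, by simp [vertexBoundary]⟩
  | succ M ih =>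
    obtain ⟨B, hB, hBcard, hBbd⟩ := ih
    obtain ⟨φ, hdisj⟩ := htrans.exists_disjoint_image hc hlf hA hB
    have hφA : (φ '' A).ncard = A.ncard := Set.ncard_image_of_injective _ φ.injective
    refine ⟨φ '' A ∪ B, (hA.image _).union hB, ?_, ?_⟩
    · rw [Set.ncard_union_eq hdisj (hA.image _) hB, hφA]
      linarith
    · calc (vertexBoundary G (φ '' A ∪ B)).ncard
          ≤ (vertexBoundary G (φ '' A) ∪ vertexBoundary G B).ncard :=
            Set.ncard_le_ncard (vertexBoundary_union_subset _ _)
              ((vertexBoundary_finite hlf (hA.image _)).union (vertexBoundary_finite hlf hB))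
        _ ≤ (vertexBoundary G (φ '' A)).ncard + (vertexBoundary G B).ncard :=
            Set.ncard_union_le _ _
        _ ≤ (M + 1) * (vertexBoundary G A).ncard := by
            rw [φ.vertexBoundary_image, Set.ncard_image_of_injective _ φ.injective]
            linarith

theorem isoProfile_mul_le [Infinite V] (hc : G.Connected) (hlf : ∀ v, (G.neighborSet v).Finite)
    (htrans : VertexTransitive G) (M n : ℕ) : isoProfile G (M * n) ≤ M * isoProfile G n := by
  obtain ⟨A, hA, hAn, hAbd⟩ := exists_isoProfile_eq (G := G) n
  obtain ⟨B, hB, hBcard, hBbd⟩ := htrans.exists_ncard_ge_mul_vertexBoundary_le hc hlf hA M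
  calc isoProfile G (M * n) ≤ (vertexBoundary G B).ncard :=
        isoProfile_le hB ((Nat.mul_le_mul_left M hAn).trans hBcard)
    _ ≤ M * isoProfile G n := hAbd ▸ hBbd

end VertexTransitive

/-- The inequalities of a quasi-isometry with natural-number constants; the lower bound is
multiplied through by `c`. -/
structure IsNatQuasiIsometry {VT VW : Type*} (T : SimpleGraph VT) (W : SimpleGraph VW)
    (f : VT → VW) (c k : ℕ) : Prop where
  dist_le : ∀ x x', T.dist x x' ≤ c * W.dist (f x) (f x') + k
  dist_map_le : ∀ x x', W.dist (f x) (f x') ≤ c * T.dist x x' + k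
  exists_dist_map_le : ∀ y, ∃ x, W.dist (f x) y ≤ k

section QuasiIsometry

variable {VT VW : Type*} {T : SimpleGraph VT} {W : SimpleGraph VW} {f : VT → VW}

theorem IsQuasiIsometry.exists_isNatQuasiIsometry {C K : ℝ} (h : IsQuasiIsometry T W f C K) :
    ∃ c k : ℕ, IsNatQuasiIsometry T W f c k := by
  obtain ⟨hC, hK, hdist, hsurj⟩ := h
  have hC₀ : 0 < C := by linarith
  have hKCK : K ≤ C * K := le_mul_of_one_le_left hK hC
  have hc := Nat.le_ceil C
  have hk := Nat.le_ceil (C * K)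
  refine ⟨⌈C⌉₊, ⌈C * K⌉₊, ⟨fun x x' => ?_, fun x x' => ?_, fun y => ?_⟩⟩
  · have hlow : (T.dist x x' : ℝ) ≤ (W.dist (f x) (f x') + K) * C := by
      rw [← div_le_iff₀ hC₀, div_eq_inv_mul, ← one_div]
      linarith [(hdist x x').1]
    have : (T.dist x x' : ℝ) ≤ ⌈C⌉₊ * W.dist (f x) (f x') + ⌈C * K⌉₊ := by
      nlinarith [mul_le_mul_of_nonneg_left hc (Nat.cast_nonneg (W.dist (f x) (f x')))]
    exact_mod_cast this
  · have : (W.dist (f x) (f x') : ℝ) ≤ ⌈C⌉₊ * T.dist x x' + ⌈C * K⌉₊ := by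
      nlinarith [(hdist x x').2, mul_le_mul_of_nonneg_left hc (Nat.cast_nonneg (T.dist x x'))]
    exact_mod_cast this
  · obtain ⟨x, hx⟩ := hsurj y
    exact ⟨x, by exact_mod_cast (show (W.dist (f x) y : ℝ) ≤ ⌈C * K⌉₊ by linarith)⟩

namespace IsNatQuasiIsometry

variable {c k : ℕ}

theorem ncard_le_ncard_image_mul [Nonempty VT] (hf : IsNatQuasiIsometry T W f c k) {M : ℕ}
    (hM : ∀ x, (T.closedBall x k).Finite ∧ (T.closedBall x k).ncard ≤ M) {A : Set VT}
    (hA : A.Finite) : A.ncard ≤ (f '' A).ncard * M := by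
  have hcover : A ⊆ ⋃ y ∈ f '' A, T.closedBall (Function.invFunOn f A y) k := by
    intro a ha
    have hfa : f a ∈ f '' A := Set.mem_image_of_mem f ha
    refine Set.mem_biUnion hfa ?_
    simpa [Function.invFunOn_eq hfa] using hf.dist_le (Function.invFunOn f A (f a)) a
  calc A.ncard ≤ (⋃ y ∈ f '' A, T.closedBall (Function.invFunOn f A y) k).ncard :=
        Set.ncard_le_ncard hcover ((hA.image f).biUnion fun _ _ => (hM _).1)
    _ ≤ (f '' A).ncard * M := (hA.image f).ncard_biUnion_le_ncard_mul fun _ _ => (hM _).2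

theorem vertexBoundary_biUnion_closedBall_subset (hf : IsNatQuasiIsometry T W f c k)
    (hTc : T.Connected) (hWc : W.Connected) (A : Set VT) :
    vertexBoundary W (⋃ a ∈ A, W.closedBall (f a) k) ⊆
      ⋃ b ∈ vertexBoundary T A, W.closedBall (f b) (c * (c * (2 * k + 1) + k) + 2 * k) := by
  rintro w ⟨hwB, w', hw', hadj⟩
  obtain ⟨a, ha, haw'⟩ : ∃ a ∈ A, W.dist (f a) w' ≤ k := by simpa using hw'
  obtain ⟨x, hxw⟩ := hf.exists_dist_map_le w
  have hxA : x ∉ A := fun hxA => hwB (Set.mem_biUnion hxA hxw)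
  have hfxfa : W.dist (f a) (f x) ≤ 2 * k + 1 := by
    have h₁ : W.dist (f a) w ≤ W.dist (f a) w' + W.dist w' w := hWc.dist_triangle
    have h₂ : W.dist (f a) (f x) ≤ W.dist (f a) w + W.dist w (f x) := hWc.dist_triangle
    rw [dist_eq_one_iff_adj.mpr hadj] at h₁
    rw [dist_comm] at hxw
    omega
  have hax : T.dist a x ≤ c * (2 * k + 1) + k :=
    (hf.dist_le a x).trans (by gcongr)
  obtain ⟨p, hp⟩ := hTc.exists_walk_length_eq_dist a x
  obtain ⟨b, hb, hbx⟩ := p.exists_mem_vertexBoundary_dist_le ha hxA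
  refine Set.mem_biUnion hb ?_
  have h₁ : W.dist (f b) w ≤ W.dist (f b) (f x) + W.dist (f x) w := hWc.dist_triangle
  have h₂ : W.dist (f b) (f x) ≤ c * (c * (2 * k + 1) + k) + k :=
    (hf.dist_map_le b x).trans (by gcongr; omega)
  show W.dist (f b) w ≤ _
  omega

theorem exists_isoProfile_le [Infinite VT] (hf : IsNatQuasiIsometry T W f c k)
    (hTc : T.Connected) (hWc : W.Connected) (hT : T.HasBoundedGeometry)
    (hW : W.HasBoundedGeometry) :
    ∃ M N : ℕ, ∀ n, isoProfile W n ≤ N * isoProfile T (M * n) := by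
  obtain ⟨M, hM⟩ := hT k
  obtain ⟨Nk, hNk⟩ := hW k
  obtain ⟨N, hN⟩ := hW (c * (c * (2 * k + 1) + k) + 2 * k)
  obtain ⟨x₀⟩ := hTc.nonempty
  have hMpos : 0 < M :=
    ((Set.ncard_pos (hM x₀).1).mpr ⟨x₀, mem_closedBall_self x₀ k⟩).trans_le (hM x₀).2
  refine ⟨M, N, fun n => ?_⟩
  obtain ⟨A, hA, hAn, hAbd⟩ := exists_isoProfile_eq (G := T) (M * n)
  set B := ⋃ a ∈ A, W.closedBall (f a) k
  have hB : B.Finite := hA.biUnion fun a _ => (hNk (f a)).1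
  have hfAB : f '' A ⊆ B := by
    rintro _ ⟨a, ha, rfl⟩
    exact Set.mem_biUnion ha (mem_closedBall_self _ _)
  have hBn : n ≤ B.ncard := by
    have := (hf.ncard_le_ncard_image_mul hM hA).trans
      (Nat.mul_le_mul_right M (Set.ncard_le_ncard hfAB hB))
    exact Nat.le_of_mul_le_mul_left (by linarith) hMpos
  have hbd := hf.vertexBoundary_biUnion_closedBall_subset hTc hWc A
  have hAbd_fin := vertexBoundary_finite hT.finite_neighborSet hA
  calc isoProfile W n ≤ (vertexBoundary W B).ncard := isoProfile_le hB hBn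
    _ ≤ (vertexBoundary T A).ncard * N :=
        (Set.ncard_le_ncard hbd (hAbd_fin.biUnion fun b _ => (hN (f b)).1)).trans
          (hAbd_fin.ncard_biUnion_le_ncard_mul fun b _ => (hN (f b)).2)
    _ = N * isoProfile T (M * n) := by rw [hAbd, mul_comm]

end IsNatQuasiIsometry

theorem isoProfile_le_mul_of_isQuasiIsometry [Infinite VT] (hTc : T.Connected)
    (hTlf : ∀ v, (T.neighborSet v).Finite) (hTtrans : VertexTransitive T) (hWc : W.Connected)
    (hWlf : ∀ v, (W.neighborSet v).Finite) (hWtrans : VertexTransitive W) {C K : ℝ}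
    (hf : IsQuasiIsometry T W f C K) :
    ∃ a : ℕ, 0 < a ∧ ∀ n, isoProfile W n ≤ a * isoProfile T n := by
  obtain ⟨c, k, hf⟩ := hf.exists_isNatQuasiIsometry
  obtain ⟨M, N, hMN⟩ := hf.exists_isoProfile_le hTc hWc (hTtrans.hasBoundedGeometry hTc hTlf)
    (hWtrans.hasBoundedGeometry hWc hWlf)
  refine ⟨N * M + 1, Nat.succ_pos _, fun n => ?_⟩
  calc isoProfile W n ≤ N * isoProfile T (M * n) := hMN n
    _ ≤ N * (M * isoProfile T n) := Nat.mul_le_mul_left N (hTtrans.isoProfile_mul_le hTc hTlf M n)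
    _ ≤ (N * M + 1) * isoProfile T n := by nlinarith

end QuasiIsometry

theorem isoProfile_quasiIsometry_invariant {VT VW : Type*}
    (T : SimpleGraph VT) (W : SimpleGraph VW)
    (hTinf : Infinite VT) (hTconn : T.Connected)
    (hTlf : ∀ v : VT, (T.neighborSet v).Finite) (hTtrans : VertexTransitive T)
    (hWinf : Infinite VW) (hWconn : W.Connected)
    (hWlf : ∀ v : VW, (W.neighborSet v).Finite) (hWtrans : VertexTransitive W)
    (hf : ∃ (f : VT → VW) (C K : ℝ), IsQuasiIsometry T W f C K) :
    (∃ a : ℕ, 0 < a ∧ ∀ n : ℕ, 1 ≤ n → isoProfile W n ≤ a * isoProfile T n) ∧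
    ((∃ (g : VW → VT) (C K : ℝ), IsQuasiIsometry W T g C K) →
      ∃ b : ℕ, 0 < b ∧ ∀ n : ℕ, 1 ≤ n → isoProfile T n ≤ b * isoProfile W n) := by
  obtain ⟨f, C, K, hf⟩ := hf
  obtain ⟨a, ha, hWT⟩ :=
    isoProfile_le_mul_of_isQuasiIsometry hTconn hTlf hTtrans hWconn hWlf hWtrans hf
  refine ⟨⟨a, ha, fun n _ => hWT n⟩, fun ⟨g, C', K', hg⟩ => ?_⟩
  obtain ⟨b, hb, hTW⟩ :=
    isoProfile_le_mul_of_isQuasiIsometry hWconn hWlf hWtrans hTconn hTlf hTtrans hg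
  exact ⟨b, hb, fun n _ => hTW n⟩
end
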